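/- Let V be a finite-dimensional real inner product space, U ⊆ V open, ρ, u : U → ℝ C² functions, and x ∈ U a point with ρ(x) = 0. Then for every orthonormal p-tuple (e₁,…,e_p) in V with Dρ(x)(e_j) = 0 for all j (a p-plane tangential to the level set {ρ = 0}), one has Σ_{j=1}^p D²(u·ρ)(x)(e_j,e_j) = u(x)·Σ_{j=1}^p D²ρ(x)(e_j,e_j). Consequently the φ-convexity of a hypersurface is independent of the choice of defining function. (Lemma 5.2, Euclidean case) -/

import Mathlib

open scoped RealInnerProductSpace

noncomputable section

variable {V : Type*} [NormedAddCommGroup V] [InnerProductSpace ℝ V] [FiniteDimensional ℝ V]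

/-! By the Leibniz rule, `D²(uρ) = u D²ρ + Du ⊗ Dρ + Dρ ⊗ Du + ρ D²u`. At a zero of `ρ` and
along a vector `v` with `Dρ(x) v = 0`, every term but `u(x) D²ρ(x)(v, v)` vanishes, so the
identity holds term by term. -/

section Leibniz

variable {𝕜 E : Type*} [NontriviallyNormedField 𝕜] [NormedAddCommGroup E] [NormedSpace 𝕜 E]
  {f g : E → 𝕜} {x : E}

theorem iteratedFDeriv_two_mul_apply (hf : ContDiffAt 𝕜 2 f x) (hg : ContDiffAt 𝕜 2 g x)
    (v w : E) :
    iteratedFDeriv 𝕜 2 (fun y => f y * g y) x ![v, w] =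
      f x * iteratedFDeriv 𝕜 2 g x ![v, w] + fderiv 𝕜 f x v * fderiv 𝕜 g x w +
        (g x * iteratedFDeriv 𝕜 2 f x ![v, w] + fderiv 𝕜 g x v * fderiv 𝕜 f x w) := by
  have hf' : ∀ᶠ y in nhds x, DifferentiableAt 𝕜 f y :=
    (hf.eventually (by simp)).mono fun y hy => hy.differentiableAt (by simp)
  have hg' : ∀ᶠ y in nhds x, DifferentiableAt 𝕜 g y :=
    (hg.eventually (by simp)).mono fun y hy => hy.differentiableAt (by simp)
  have hDf : DifferentiableAt 𝕜 (fderiv 𝕜 f) x :=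
    (hf.fderiv_right (m := 1) le_rfl).differentiableAt one_ne_zero
  have hDg : DifferentiableAt 𝕜 (fderiv 𝕜 g) x :=
    (hg.fderiv_right (m := 1) le_rfl).differentiableAt one_ne_zero
  have hD : fderiv 𝕜 (fun y => f y * g y) =ᶠ[nhds x]
      fun y => f y • fderiv 𝕜 g y + g y • fderiv 𝕜 f y := by
    filter_upwards [hf', hg'] with y hfy hgy
    exact fderiv_mul hfy hgy
  rw [iteratedFDeriv_two_apply, iteratedFDeriv_two_apply, iteratedFDeriv_two_apply,
    hD.fderiv_eq,
    fderiv_fun_add (f := fun y => f y • fderiv 𝕜 g y) (g := fun y => g y • fderiv 𝕜 f y)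
      (hf'.self_of_nhds.smul hDg) (hg'.self_of_nhds.smul hDf),
    fderiv_fun_smul hf'.self_of_nhds hDg, fderiv_fun_smul hg'.self_of_nhds hDf]
  simp

theorem iteratedFDeriv_two_mul_apply_of_tangent (hf : ContDiffAt 𝕜 2 f x)
    (hg : ContDiffAt 𝕜 2 g x) (hgx : g x = 0) {v : E} (hv : fderiv 𝕜 g x v = 0) :
    iteratedFDeriv 𝕜 2 (fun y => f y * g y) x ![v, v] =
      f x * iteratedFDeriv 𝕜 2 g x ![v, v] := by
  simp [iteratedFDeriv_two_mul_apply hf hg, hgx, hv]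

end Leibniz

theorem traceAlong_hessian_mul_defining {p : ℕ}
    (U : Set V) (hU : IsOpen U) (ρ u : V → ℝ)
    (hρ : ContDiffOn ℝ 2 ρ U) (hu : ContDiffOn ℝ 2 u U)
    (x : V) (hx : x ∈ U) (hρx : ρ x = 0)
    (e : Fin p → V)
    (htang : ∀ j, fderiv ℝ ρ x (e j) = 0) :
    ∑ j, iteratedFDeriv ℝ 2 (fun y => u y * ρ y) x ![e j, e j] =
      u x * ∑ j, iteratedFDeriv ℝ 2 ρ x ![e j, e j] := by
  rw [Finset.mul_sum]
  exact Finset.sum_congr rfl fun j _ =>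
    iteratedFDeriv_two_mul_apply_of_tangent (hu.contDiffAt (hU.mem_nhds hx))
      (hρ.contDiffAt (hU.mem_nhds hx)) hρx (htang j)
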